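/- Let n > 1 and let e ∈ sl(n|n)₀ be a nilpotent matrix with Jordan type λ = (λ₁ ≥ … ≥ λ_{r+s}). Let Z = {x ∈ sl(n|n)^e : [x,y] ∈ ℂ·I for all y ∈ sl(n|n)^e} (the lift to sl(n|n) of the centre of the centralizer of the image of e in psl(n|n)). Then for every invertible block-diagonal matrix g = diag(A,B) ∈ GL_{2n}(ℂ) with A, B ∈ GL_n(ℂ), det A = det B and g e g⁻¹ = e, and every x ∈ Z, one has g x g⁻¹ − x ∈ ℂ·I. In other words, the group G^e of all such g acts trivially on the centre of the centralizer of the image of e in psl(n|n): (z(g^e))^{G^e} = z(g^e). -/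

import Mathlib

open Matrix

noncomputable section

namespace PaperStmt

abbrev Mat (N : ℕ) := Matrix (Fin N) (Fin N) ℂ

/-- Parity of a coordinate: `false` (even) for the first `m` coordinates, `true` (odd)
for the remaining ones. -/
def par (m : ℕ) {N : ℕ} (i : Fin N) : Bool := decide (m ≤ (i : ℕ))

/-- `x` is homogeneous of parity `b`: the entry `x i j` vanishes unless the parities of
`i` and `j` differ by `b`. -/
def IsHomog (m : ℕ) {N : ℕ} (b : Bool) (x : Mat N) : Prop :=
  ∀ i j : Fin N, (par m i != par m j) ≠ b → x i j = 0

/-- `x` is homogeneous (of some parity). -/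
def Homogeneous (m : ℕ) {N : ℕ} (x : Mat N) : Prop :=
  IsHomog m false x ∨ IsHomog m true x

/-- The odd (block-off-diagonal) part of a matrix. -/
def oddPart (m : ℕ) {N : ℕ} (x : Mat N) : Mat N :=
  Matrix.of fun i j => if par m i != par m j then x i j else 0

/-- The even (block-diagonal) part of a matrix. -/
def evenPart (m : ℕ) {N : ℕ} (x : Mat N) : Mat N :=
  Matrix.of fun i j => if par m i != par m j then 0 else x i j

/-- The super bracket, extended bilinearly from homogeneous elements: for homogeneous
`x, y` of parities `|x|, |y|` it equals `x*y - (-1)^{|x||y|} y*x`. -/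
def sbr (m : ℕ) {N : ℕ} (x y : Mat N) : Mat N :=
  x * y - y * x + (2 : ℂ) • (oddPart m y * oddPart m x)

/-- The supertrace. -/
def str (m : ℕ) {N : ℕ} (x : Mat N) : ℂ :=
  ∑ i : Fin N, if par m i then -x i i else x i i

/-- The underlying set of `sl(m|n)` inside `gl(m|n)`. -/
def slSet (m : ℕ) {N : ℕ} : Set (Mat N) := {x | str m x = 0}

/-- The centralizer `𝔞^e` of `e` in (the set underlying) `𝔞`. -/
def cent {N : ℕ} (A : Set (Mat N)) (e : Mat N) : Set (Mat N) := {x ∈ A | e * x = x * e}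

/-- `[A,B]`: the span of all super brackets of homogeneous elements of `A` and `B`. -/
def bracketSpan (m : ℕ) {N : ℕ} (A B : Set (Mat N)) : Submodule ℂ (Mat N) :=
  Submodule.span ℂ
    {z | ∃ x ∈ A, ∃ y ∈ B, Homogeneous m x ∧ Homogeneous m y ∧ z = sbr m x y}

/-- `(e,h,f)` is an `sl(2)`-triple. -/
def IsSl2 {N : ℕ} (e h f : Mat N) : Prop :=
  h * e - e * h = (2 : ℂ) • e ∧ h * f - f * h = (-2 : ℂ) • f ∧ e * f - f * e = h

/-- `𝔞^e(j)`: the `ad h`-eigenspace of eigenvalue `j` inside the centralizer `𝔞^e`. -/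
def gpart {N : ℕ} (A : Set (Mat N)) (e h : Mat N) (j : ℕ) : Set (Mat N) :=
  {x ∈ cent A e | h * x - x * h = (j : ℂ) • x}

/-- The nilpotent matrix `A` has Jordan blocks of sizes `μ 0, …, μ (r-1)` (with
multiplicity): all parts are `≥ 1` and for every `k` the number of blocks of size
`≥ k+1` equals `dim ker A^{k+1} - dim ker A^k`. -/
def HasJordanBlocks {d r : ℕ} (A : Matrix (Fin d) (Fin d) ℂ) (μ : Fin r → ℕ) : Prop :=
  (∀ i, 1 ≤ μ i) ∧
  ∀ k : ℕ,
    (Finset.univ.filter fun i => k + 1 ≤ μ i).card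
        + Module.finrank ℂ (LinearMap.ker (Matrix.mulVecLin A ^ k))
      = Module.finrank ℂ (LinearMap.ker (Matrix.mulVecLin A ^ (k + 1)))

/-- The restriction of an even matrix to the even part `V₀ = ℂ^m`. -/
def blk0 (m n : ℕ) (e : Mat (m + n)) : Matrix (Fin m) (Fin m) ℂ :=
  Matrix.of fun i j => e (Fin.castAdd n i) (Fin.castAdd n j)

/-- The restriction of an even matrix to the odd part `V₁ = ℂ^n`. -/
def blk1 (m n : ℕ) (e : Mat (m + n)) : Matrix (Fin n) (Fin n) ℂ :=
  Matrix.of fun i j => e (Fin.natAdd m i) (Fin.natAdd m j)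

/-- The even nilpotent matrix `e` has (combined, decreasingly ordered) Jordan type
`lam`, consisting of the `r` Jordan block sizes of `e|V₀` together with the `s` Jordan
block sizes of `e|V₁`. -/
def HasJordanType (m n : ℕ) (e : Mat (m + n)) {r s : ℕ} (lam : Fin (r + s) → ℕ) : Prop :=
  Antitone lam ∧
  ∃ (μ : Fin r → ℕ) (ν : Fin s → ℕ),
    HasJordanBlocks (blk0 m n e) μ ∧ HasJordanBlocks (blk1 m n e) ν ∧
      Finset.univ.val.map lam = Finset.univ.val.map μ + Finset.univ.val.map ν

/-- Extension of a partition by zero: `lamExt lam i = λ_{i+1}` for `i < k` and `0` beyond. -/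
def lamExt {k : ℕ} (lam : Fin k → ℕ) (i : ℕ) : ℕ := if h : i < k then lam ⟨i, h⟩ else 0

end PaperStmt

/-!
Write `e = diag(E₀, E₁)` and `x = (X₀₀ X₀₁; X₁₀ X₁₁)`. Bracketing `x` with the even elements
`diag(Y₀, (tr Y₀ / n) • 1)` of the centralizer shows that `X₀₀` commutes with every `Y₀` commuting
with `E₀`, in particular with `A`, and that such a `Y₀` acts on `X₀₁` by the scalar `tr Y₀ / n`;
symmetrically for `X₁₁`, `B` and `X₁₀`.

The off-diagonal blocks vanish. If `E₀ ^ (n - 1) = 0`, let `d < n` be the nilpotency class of `E₀`: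
`Y₀ = ∑ E₀ⁱ W E₀ᵈ⁻¹⁻ⁱ` commutes with `E₀`, has trace `d · tr (E₀ᵈ⁻¹ W)` and acts on `X₀₁` as
`E₀ᵈ⁻¹ W`, which contradicts the scalar action unless `X₀₁ = 0`. If `E₀` is regular, the odd
elements of the centralizer with lower-left block `Q = ∑ E₁ⁱ W E₀ⁿ⁻¹⁻ⁱ` force `X₀₁ Q = X₀₁ W E₀ⁿ⁻¹`
(using `X₀₁ E₁ = 0`) to be a scalar; it is killed by `E₀ ≠ 0`, so `X₀₁ W E₀ⁿ⁻¹ = 0` for all `W`.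
Hence `x` is block diagonal and commutes with `g = diag(A, B)`.
-/

section TwistedGeomSum

variable {R : Type*} [Ring R] (a w b : R) (d : ℕ)

def twistedGeomSum : R := ∑ i ∈ Finset.range d, a ^ i * w * b ^ (d - 1 - i)

theorem twistedGeomSum_succ :
    twistedGeomSum a w b (d + 1) = twistedGeomSum a w b d * b + a ^ d * w := by
  rw [twistedGeomSum, Finset.sum_range_succ, twistedGeomSum, Finset.sum_mul]
  refine congrArg₂ (· + ·) (Finset.sum_congr rfl fun i hi => ?_) (by simp)
  have : d + 1 - 1 - i = d - 1 - i + 1 := by have := Finset.mem_range.1 hi; omega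
  rw [mul_assoc _ _ b, ← pow_succ, this]

theorem twistedGeomSum_succ' :
    twistedGeomSum a w b (d + 1) = a * twistedGeomSum a w b d + w * b ^ d := by
  rw [twistedGeomSum, Finset.sum_range_succ', twistedGeomSum, Finset.mul_sum]
  refine congrArg₂ (· + ·) (Finset.sum_congr rfl fun i _ => ?_) (by simp)
  rw [pow_succ', mul_assoc a, mul_assoc a]
  congr 3
  omega

theorem mul_twistedGeomSum_sub :
    a * twistedGeomSum a w b d - twistedGeomSum a w b d * b = a ^ d * w - w * b ^ d := by
  rw [sub_eq_sub_iff_add_eq_add, ← twistedGeomSum_succ', twistedGeomSum_succ, add_comm]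

variable {a b d} in
theorem mul_twistedGeomSum_of_pow_eq_zero (ha : a ^ d = 0) (hb : b ^ d = 0) :
    a * twistedGeomSum a w b d = twistedGeomSum a w b d * b := by
  rw [← sub_eq_zero, mul_twistedGeomSum_sub, ha, hb, zero_mul, mul_zero, sub_zero]

variable {a b} in
theorem twistedGeomSum_succ_mul_of_mul_eq_zero {m : R} (hm : b * m = 0) :
    twistedGeomSum a w b (d + 1) * m = a ^ d * w * m := by
  rw [twistedGeomSum_succ, add_mul, mul_assoc _ b, hm, mul_zero, zero_add]

variable {a b} in
theorem mul_twistedGeomSum_succ_of_mul_eq_zero {m : R} (hm : m * a = 0) :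
    m * twistedGeomSum a w b (d + 1) = m * w * b ^ d := by
  rw [twistedGeomSum_succ', mul_add, ← mul_assoc, hm, zero_mul, zero_add, mul_assoc]

end TwistedGeomSum

namespace Matrix

theorem trace_twistedGeomSum {ι R : Type*} [Fintype ι] [DecidableEq ι] [CommRing R]
    (A W : Matrix ι ι R) (d : ℕ) :
    trace (twistedGeomSum A W A d) = d * trace (A ^ (d - 1) * W) := by
  have hterm : ∀ i ∈ Finset.range d,
      trace (A ^ i * W * A ^ (d - 1 - i)) = trace (A ^ (d - 1) * W) := by
    intro i hi
    have hid : d - 1 - i + i = d - 1 := Nat.sub_add_cancel (by have := Finset.mem_range.1 hi; omega)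
    rw [trace_mul_comm, ← mul_assoc, ← pow_add, hid]
  rw [twistedGeomSum, trace_sum, Finset.sum_congr rfl hterm, Finset.sum_const, Finset.card_range,
    nsmul_eq_mul]

theorem eq_zero_or_eq_zero_of_forall_mul_mul_eq {ι K : Type*} [Fintype ι] [DecidableEq ι]
    [Field K] {F M : Matrix ι ι K} {t : K} (ht : t ≠ 1)
    (h : ∀ W, F * W * M = (t * trace (F * W)) • M) : F = 0 ∨ M = 0 := by
  have hentry : ∀ a b i l, F a l * M i b = t * F i l * M a b := by
    intro a b i l
    have := congrFun₂ (h (single l i 1)) a b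
    rw [mul_assoc, mul_apply, Finset.sum_eq_single l (fun k _ hk => by simp [hk]) (by simp)] at this
    simpa [trace_mul_single, mul_assoc] using this
  by_contra hFM
  obtain ⟨hF, hM⟩ := not_or.1 hFM
  obtain ⟨a, l, hal⟩ : ∃ a l, F a l ≠ 0 := by
    by_contra! hzero; exact hF (ext hzero)
  obtain ⟨i, b, hib⟩ : ∃ i b, M i b ≠ 0 := by
    by_contra! hzero; exact hM (ext hzero)
  have hil : F i l * M i b = 0 := by
    have h1 : (1 - t) * (F i l * M i b) = 0 := by linear_combination hentry i b i l
    exact (mul_eq_zero.1 h1).resolve_left (sub_ne_zero.2 ht.symm)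
  have h2 := hentry a b i l
  rw [(mul_eq_zero.1 hil).resolve_right hib, mul_zero, zero_mul] at h2
  exact mul_ne_zero hal hib h2

variable {K : Type*} [Field K] {n : ℕ} {E F M : Matrix (Fin n) (Fin n) K}

theorem pow_card_eq_zero_of_isNilpotent {ι : Type*} [Fintype ι] [DecidableEq ι]
    {A : Matrix ι ι K} (hA : IsNilpotent A) : A ^ Fintype.card ι = 0 := by
  have hchar : A.charpoly = Polynomial.X ^ Fintype.card ι :=
    sub_eq_zero.1 (isNilpotent_charpoly_sub_pow_of_isNilpotent hA).eq_zero
  simpa [hchar] using aeval_self_charpoly A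

theorem mul_eq_zero_of_forall_commute_mul_eq_trace_div_smul (hE : IsNilpotent E)
    (hM : ∀ Y, Commute E Y → Y * M = (trace Y / n) • M) : E * M = 0 := by
  rw [hM E (Commute.refl E), (isNilpotent_trace_of_isNilpotent hE).eq_zero, zero_div, zero_smul]

theorem eq_zero_of_forall_commute_mul_eq_trace_div_smul [CharZero K] (hE : IsNilpotent E)
    (hEn : E ^ (n - 1) = 0) (hM : ∀ Y, Commute E Y → Y * M = (trace Y / n) • M) : M = 0 := by
  rcases Nat.eq_zero_or_pos n with rfl | hn
  · exact Subsingleton.elim _ _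
  have : Nonempty (Fin n) := ⟨⟨0, hn⟩⟩
  obtain ⟨k, hk⟩ : ∃ k, nilpotencyClass E = k + 1 :=
    Nat.exists_eq_succ_of_ne_zero (pos_nilpotencyClass_iff.2 hE).ne'
  obtain ⟨hEk1, hEk⟩ := nilpotencyClass_eq_succ_iff.1 hk
  have hkn : k + 1 < n := hk ▸ (Nat.sInf_le hEn).trans_lt (Nat.sub_lt hn one_pos)
  have hEM := mul_eq_zero_of_forall_commute_mul_eq_trace_div_smul hE hM
  have key : ∀ W, E ^ k * W * M = (((k + 1 : ℕ) / n : K) * trace (E ^ k * W)) • M := by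
    intro W
    have hY := hM _ (mul_twistedGeomSum_of_pow_eq_zero W hEk1 hEk1)
    rw [twistedGeomSum_succ_mul_of_mul_eq_zero W _ hEM, trace_twistedGeomSum,
      Nat.add_sub_cancel] at hY
    rw [hY]
    congr 1
    ring
  have ht : ((k + 1 : ℕ) / n : K) ≠ 1 := by
    rw [Ne, div_eq_one_iff_eq (by exact_mod_cast hn.ne')]
    exact_mod_cast hkn.ne
  exact (eq_zero_or_eq_zero_of_forall_mul_mul_eq ht key).resolve_left hEk

theorem eq_zero_of_forall_intertwining_mul_eq_smul_one (hn : 1 < n) (hE : E ^ n = 0)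
    (hF : F ^ n = 0) (hEreg : E ^ (n - 1) ≠ 0) (hEM : E * M = 0) (hMF : M * F = 0)
    (hM : ∀ Q, F * Q = Q * E → ∃ c : K, M * Q = c • 1) : M = 0 := by
  have hE0 : E ≠ 0 := by
    rintro rfl
    exact hEreg (zero_pow (by omega))
  have hn1 : n - 1 + 1 = n := by omega
  have key : ∀ W, M * W * E ^ (n - 1) = ((0 : K) * trace (M * W)) • E ^ (n - 1) := by
    intro W
    obtain ⟨c, hc⟩ := hM _ (mul_twistedGeomSum_of_pow_eq_zero (d := n - 1 + 1) W
      (by rwa [hn1]) (by rwa [hn1]))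
    rw [mul_twistedGeomSum_succ_of_mul_eq_zero W _ hMF] at hc
    have hcE : c • E = 0 := by
      rw [← mul_one E, ← mul_smul_comm, ← hc, ← mul_assoc, ← mul_assoc, hEM, zero_mul, zero_mul]
    rw [hc, (smul_eq_zero.1 hcE).resolve_right hE0, zero_mul, zero_smul, zero_smul]
  exact (eq_zero_or_eq_zero_of_forall_mul_mul_eq zero_ne_one key).resolve_right hEreg

theorem eq_zero_of_forall_commute_of_forall_intertwining [CharZero K] (hn : 1 < n)
    (hE : IsNilpotent E) (hF : IsNilpotent F) (hMF : M * F = 0)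
    (hMcomm : ∀ Y, Commute E Y → Y * M = (trace Y / n) • M)
    (hMint : ∀ Q, F * Q = Q * E → ∃ c : K, M * Q = c • 1) : M = 0 := by
  by_cases hEn : E ^ (n - 1) = 0
  · exact eq_zero_of_forall_commute_mul_eq_trace_div_smul hE hEn hMcomm
  · simpa using eq_zero_of_forall_intertwining_mul_eq_smul_one hn
      (by simpa using pow_card_eq_zero_of_isNilpotent hE)
      (by simpa using pow_card_eq_zero_of_isNilpotent hF) hEn
      (mul_eq_zero_of_forall_commute_mul_eq_trace_div_smul hE hMcomm) hMF hMint

theorem fromBlocks_zero_pow {ι κ R : Type*} [Fintype ι] [Fintype κ] [DecidableEq ι]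
    [DecidableEq κ] [Semiring R] (A : Matrix ι ι R) (D : Matrix κ κ R) (k : ℕ) :
    fromBlocks A 0 0 D ^ k = fromBlocks (A ^ k) 0 0 (D ^ k) := by
  induction k with
  | zero => simp [fromBlocks_one]
  | succ k ih => simp [pow_succ, ih, fromBlocks_multiply]

theorem isNilpotent_blocks_of_isNilpotent_fromBlocks {ι κ R : Type*} [Fintype ι] [Fintype κ]
    [DecidableEq ι] [DecidableEq κ] [Semiring R] {A : Matrix ι ι R} {D : Matrix κ κ R}
    (h : IsNilpotent (fromBlocks A 0 0 D)) : IsNilpotent A ∧ IsNilpotent D := by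
  obtain ⟨k, hk⟩ := h
  rw [fromBlocks_zero_pow, ← fromBlocks_zero, fromBlocks_inj] at hk
  exact ⟨⟨k, hk.1⟩, ⟨k, hk.2.2.2⟩⟩

theorem commute_fromBlocks_zero_iff {ι κ R : Type*} [Fintype ι] [Fintype κ] [Semiring R]
    {A A' : Matrix ι ι R} {D D' : Matrix κ κ R} :
    Commute (fromBlocks A 0 0 D) (fromBlocks A' 0 0 D') ↔ Commute A A' ∧ Commute D D' := by
  simp [Commute, SemiconjBy, fromBlocks_multiply, fromBlocks_inj]

end Matrix

namespace PaperStmt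

section BlockForm

variable {m n : ℕ} (X Y : Matrix (Fin m ⊕ Fin n) (Fin m ⊕ Fin n) ℂ)

def blockEquiv (m n : ℕ) : Matrix (Fin m ⊕ Fin n) (Fin m ⊕ Fin n) ℂ ≃ₐ[ℂ] Mat (m + n) :=
  reindexAlgEquiv ℂ ℂ finSumFinEquiv

theorem blockEquiv_apply_finSumFinEquiv (p q : Fin m ⊕ Fin n) :
    blockEquiv m n X (finSumFinEquiv p) (finSumFinEquiv q) = X p q := by
  simp [blockEquiv]

@[simp]
theorem par_castAdd (i : Fin m) : par m (Fin.castAdd n i) = false :=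
  decide_eq_false (Nat.not_le.2 i.isLt)

@[simp]
theorem par_natAdd (i : Fin n) : par m (Fin.natAdd m i) = true :=
  decide_eq_true (Nat.le_add_right m i)

theorem oddPart_blockEquiv :
    oddPart m (blockEquiv m n X) = blockEquiv m n (fromBlocks 0 X.toBlocks₁₂ X.toBlocks₂₁ 0) := by
  ext i j
  obtain ⟨p, rfl⟩ := finSumFinEquiv.surjective i
  obtain ⟨q, rfl⟩ := finSumFinEquiv.surjective j
  simp only [oddPart, of_apply, blockEquiv_apply_finSumFinEquiv]
  rcases p with p | p <;> rcases q with q | q <;>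
    simp [toBlocks₁₂, toBlocks₂₁]

theorem sbr_blockEquiv :
    sbr m (blockEquiv m n X) (blockEquiv m n Y) = blockEquiv m n (X * Y - Y * X + (2 : ℂ) •
      (fromBlocks 0 Y.toBlocks₁₂ Y.toBlocks₂₁ 0 * fromBlocks 0 X.toBlocks₁₂ X.toBlocks₂₁ 0)) := by
  simp only [sbr, oddPart_blockEquiv, map_add, map_sub, map_mul, map_smul]

theorem str_blockEquiv :
    str m (blockEquiv m n X) = trace X.toBlocks₁₁ - trace X.toBlocks₂₂ := by
  rw [str, ← finSumFinEquiv.sum_comp, Fintype.sum_sum_type]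
  simp only [blockEquiv_apply_finSumFinEquiv]
  simp [trace, toBlocks₁₁, toBlocks₂₂, sub_eq_add_neg]

theorem exists_eq_blockEquiv_fromBlocks_of_isHomog {e : Mat (m + n)} (he : IsHomog m false e) :
    ∃ E₀ E₁, e = blockEquiv m n (fromBlocks E₀ 0 0 E₁) := by
  refine ⟨((blockEquiv m n).symm e).toBlocks₁₁, ((blockEquiv m n).symm e).toBlocks₂₂, ?_⟩
  ext i j
  obtain ⟨p, rfl⟩ := finSumFinEquiv.surjective i
  obtain ⟨q, rfl⟩ := finSumFinEquiv.surjective j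
  rw [blockEquiv_apply_finSumFinEquiv]
  rcases p with p | p <;> rcases q with q | q <;> simp [blockEquiv, toBlocks₁₁, toBlocks₂₂] <;>
    exact he _ _ (by simp)

theorem blockEquiv_fromBlocks_mem_cent {E₀ Y₀ : Matrix (Fin m) (Fin m) ℂ}
    {E₁ Y₁ : Matrix (Fin n) (Fin n) ℂ} {P : Matrix (Fin m) (Fin n) ℂ} {Q : Matrix (Fin n) (Fin m) ℂ}
    (h₀ : Commute E₀ Y₀) (h₁ : Commute E₁ Y₁) (hP : E₀ * P = P * E₁) (hQ : E₁ * Q = Q * E₀)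
    (htr : trace Y₀ = trace Y₁) :
    blockEquiv m n (fromBlocks Y₀ P Q Y₁) ∈
      cent (slSet m) (blockEquiv m n (fromBlocks E₀ 0 0 E₁)) := by
  refine ⟨by simp [slSet, str_blockEquiv, htr], ?_⟩
  rw [← map_mul, ← map_mul, fromBlocks_multiply, fromBlocks_multiply]
  simp [h₀.eq, h₁.eq, hP, hQ]

end BlockForm

section CentralBlocks

variable {n : ℕ} {E₀ E₁ X₀₀ X₀₁ X₁₀ X₁₁ : Matrix (Fin n) (Fin n) ℂ}

/-- `(X₀₀ X₀₁; X₁₀ X₁₁)` super-commutes, modulo scalars, with every `(Y₀ P; Q Y₁)` of supertrace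
zero commuting with `diag(E₀, E₁)`; the four conditions are the blocks of the super bracket. -/
def IsCentralBlocks (E₀ E₁ X₀₀ X₀₁ X₁₀ X₁₁ : Matrix (Fin n) (Fin n) ℂ) : Prop :=
  ∀ Y₀ P Q Y₁, Commute E₀ Y₀ → Commute E₁ Y₁ → E₀ * P = P * E₁ → E₁ * Q = Q * E₀ →
    trace Y₀ = trace Y₁ → ∃ c : ℂ,
      X₀₀ * Y₀ - Y₀ * X₀₀ + (X₀₁ * Q + P * X₁₀) = c • 1 ∧
      X₀₀ * P - P * X₁₁ + (X₀₁ * Y₁ - Y₀ * X₀₁) = 0 ∧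
      X₁₁ * Q - Q * X₀₀ + (X₁₀ * Y₀ - Y₁ * X₁₀) = 0 ∧
      X₁₁ * Y₁ - Y₁ * X₁₁ + (X₁₀ * P + Q * X₀₁) = c • 1

theorem isCentralBlocks_of_forall_sbr_mem_span
    (hZ : ∀ y ∈ cent (slSet n) (blockEquiv n n (fromBlocks E₀ 0 0 E₁)),
      sbr n (blockEquiv n n (fromBlocks X₀₀ X₀₁ X₁₀ X₁₁)) y ∈ Submodule.span ℂ {1}) :
    IsCentralBlocks E₀ E₁ X₀₀ X₀₁ X₁₀ X₁₁ := by
  intro Y₀ P Q Y₁ h₀ h₁ hP hQ htr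
  obtain ⟨c, hc⟩ := Submodule.mem_span_singleton.1
    (hZ _ (blockEquiv_fromBlocks_mem_cent h₀ h₁ hP hQ htr))
  rw [sbr_blockEquiv, ← map_one (blockEquiv n n), ← map_smul, (blockEquiv n n).injective.eq_iff,
    ← fromBlocks_one] at hc
  simp only [toBlocks_fromBlocks₁₂, toBlocks_fromBlocks₂₁, fromBlocks_multiply, sub_eq_add_neg,
    fromBlocks_neg, fromBlocks_add, fromBlocks_smul, fromBlocks_inj, zero_mul, mul_zero, add_zero,
    zero_add, smul_zero] at hc
  obtain ⟨h₀₀, h₀₁, h₁₀, h₁₁⟩ := hc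
  refine ⟨c, ?_, ?_, ?_, ?_⟩
  · rw [h₀₀]; module
  · rw [h₀₁]; module
  · rw [h₁₀]; module
  · rw [h₁₁]; module

theorem trace_trace_div_smul_one (Y : Matrix (Fin n) (Fin n) ℂ) :
    trace ((trace Y / n) • (1 : Matrix (Fin n) (Fin n) ℂ)) = trace Y := by
  rcases eq_or_ne n 0 with rfl | hn
  · simp [trace]
  · rw [trace_smul, trace_one, Fintype.card_fin, smul_eq_mul,
      div_mul_cancel₀ _ (Nat.cast_ne_zero.2 hn)]

namespace IsCentralBlocks

theorem symm (h : IsCentralBlocks E₀ E₁ X₀₀ X₀₁ X₁₀ X₁₁) :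
    IsCentralBlocks E₁ E₀ X₁₁ X₁₀ X₀₁ X₀₀ :=
  fun Y₁ Q P Y₀ h₁ h₀ hQ hP htr =>
    (h Y₀ P Q Y₁ h₀ h₁ hP hQ htr.symm).imp fun _ ⟨e₀₀, e₀₁, e₁₀, e₁₁⟩ => ⟨e₁₁, e₁₀, e₀₁, e₀₀⟩

theorem mul_eq_trace_div_smul (h : IsCentralBlocks E₀ E₁ X₀₀ X₀₁ X₁₀ X₁₁)
    {Y₀ : Matrix (Fin n) (Fin n) ℂ} (hY : Commute E₀ Y₀) : Y₀ * X₀₁ = (trace Y₀ / n) • X₀₁ := by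
  obtain ⟨-, -, h₀₁, -, -⟩ := h Y₀ 0 0 ((trace Y₀ / n) • 1) hY
    ((Commute.one_right E₁).smul_right _) (by simp) (by simp) (trace_trace_div_smul_one Y₀).symm
  simpa [sub_eq_zero, eq_comm] using h₀₁

theorem commute (h : IsCentralBlocks E₀ E₁ X₀₀ X₀₁ X₁₀ X₁₁) {Y₀ : Matrix (Fin n) (Fin n) ℂ}
    (hY : Commute E₀ Y₀) : Commute X₀₀ Y₀ := by
  rcases eq_or_ne n 0 with rfl | hn
  · exact Subsingleton.elim (X₀₀ * Y₀) _
  obtain ⟨c, hc, -⟩ := h Y₀ 0 0 ((trace Y₀ / n) • 1) hY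
    ((Commute.one_right E₁).smul_right _) (by simp) (by simp) (trace_trace_div_smul_one Y₀).symm
  simp only [mul_zero, zero_mul, add_zero] at hc
  have hc0 : (n : ℂ) * c = 0 := by
    simpa [trace_mul_comm X₀₀, mul_comm] using (congrArg trace hc).symm
  rw [(mul_eq_zero.1 hc0).resolve_left (Nat.cast_ne_zero.2 hn), zero_smul, sub_eq_zero] at hc
  exact hc

theorem mul_eq_zero_of_trace_eq_zero (h : IsCentralBlocks E₀ E₁ X₀₀ X₀₁ X₁₀ X₁₁)
    {Y₁ : Matrix (Fin n) (Fin n) ℂ} (hY : Commute E₁ Y₁) (htr : trace Y₁ = 0) :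
    X₀₁ * Y₁ = 0 := by
  obtain ⟨-, -, h₀₁, -, -⟩ := h 0 0 0 Y₁ (Commute.zero_right E₀) hY (by simp) (by simp)
    (by simp [htr])
  simpa using h₀₁

theorem exists_mul_eq_smul_one (h : IsCentralBlocks E₀ E₁ X₀₀ X₀₁ X₁₀ X₁₁)
    {Q : Matrix (Fin n) (Fin n) ℂ} (hQ : E₁ * Q = Q * E₀) : ∃ c : ℂ, X₀₁ * Q = c • 1 := by
  obtain ⟨c, hc, -⟩ := h 0 0 Q 0 (Commute.zero_right E₀) (Commute.zero_right E₁) (by simp) hQ rfl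
  exact ⟨c, by simpa using hc⟩

theorem offDiag_eq_zero (h : IsCentralBlocks E₀ E₁ X₀₀ X₀₁ X₁₀ X₁₁) (hn : 1 < n)
    (hE₀ : IsNilpotent E₀) (hE₁ : IsNilpotent E₁) : X₀₁ = 0 :=
  eq_zero_of_forall_commute_of_forall_intertwining hn hE₀ hE₁
    (h.mul_eq_zero_of_trace_eq_zero (Commute.refl E₁)
      (isNilpotent_trace_of_isNilpotent hE₁).eq_zero)
    (fun _ => h.mul_eq_trace_div_smul) (fun _ => h.exists_mul_eq_smul_one)

end IsCentralBlocks

end CentralBlocks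

theorem psl_group_acts_trivially_on_centre_general
    (n : ℕ) (hn : 1 < n)
    (e : Mat (n + n)) (heEven : IsHomog n false e)
    (heNil : IsNilpotent e)
    (A B : Matrix (Fin n) (Fin n) ℂ) (hA : IsUnit A.det) (hB : IsUnit B.det)
    (g : Mat (n + n))
    (hg : g = Matrix.reindex finSumFinEquiv finSumFinEquiv (Matrix.fromBlocks A 0 0 B))
    (hge : g * e * g⁻¹ = e)
    (x : Mat (n + n))
    (hxZ : ∀ y ∈ cent (slSet n) e, sbr n x y ∈ Submodule.span ℂ {(1 : Mat (n + n))}) :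
    g * x * g⁻¹ - x ∈ Submodule.span ℂ {(1 : Mat (n + n))} := by
  obtain ⟨E₀, E₁, rfl⟩ := exists_eq_blockEquiv_fromBlocks_of_isHomog heEven
  obtain ⟨X₀₀, X₀₁, X₁₀, X₁₁, rfl⟩ : ∃ X₀₀ X₀₁ X₁₀ X₁₁,
      x = blockEquiv n n (fromBlocks X₀₀ X₀₁ X₁₀ X₁₁) :=
    ⟨_, _, _, _, by rw [fromBlocks_toBlocks, AlgEquiv.apply_symm_apply]⟩
  have hZ := isCentralBlocks_of_forall_sbr_mem_span hxZ
  obtain ⟨hE₀, hE₁⟩ := isNilpotent_blocks_of_isNilpotent_fromBlocks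
    (by simpa using heNil.map (blockEquiv n n).symm)
  have hgdet : IsUnit g.det := by
    rw [hg, det_reindex_self, det_fromBlocks_zero₂₁]
    exact hA.mul hB
  replace hg : g = blockEquiv n n (fromBlocks A 0 0 B) := hg
  have hgE : Commute g (blockEquiv n n (fromBlocks E₀ 0 0 E₁)) := by
    rw [Commute, SemiconjBy]
    conv_lhs => rw [← nonsing_inv_mul_cancel_right g (g * _) hgdet, hge]
  rw [hg, commute_map_iff (blockEquiv n n).injective, commute_fromBlocks_zero_iff] at hgE
  have hgx : Commute g (blockEquiv n n (fromBlocks X₀₀ 0 0 X₁₁)) := by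
    rw [hg, commute_map_iff (blockEquiv n n).injective, commute_fromBlocks_zero_iff]
    exact ⟨(hZ.commute hgE.1.symm).symm, (hZ.symm.commute hgE.2.symm).symm⟩
  rw [hZ.offDiag_eq_zero hn hE₀ hE₁, hZ.symm.offDiag_eq_zero hn hE₁ hE₀, hgx.eq,
    mul_nonsing_inv_cancel_right g _ hgdet, sub_self]
  exact Submodule.zero_mem _

/-- For `e` nilpotent even in `sl(n|n)` (`n > 1`), every element
`g = diag(A,B)` with `A, B ∈ GL_n(ℂ)`, `det A = det B` and `g e g⁻¹ = e` moves each
element `x` of the lifted centre `Z` of the centralizer of the image of `e` in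
`psl(n|n)` only by a multiple of the identity: `g x g⁻¹ − x ∈ ℂ·I`. -/
theorem psl_group_acts_trivially_on_centre
    (n : ℕ) (hn : 1 < n)
    (e : Mat (n + n)) (heEven : IsHomog n false e)
    (heSl : e ∈ (slSet n : Set (Mat (n + n)))) (heNil : IsNilpotent e)
    (r s : ℕ) (lam : Fin (r + s) → ℕ) (hJT : HasJordanType n n e lam)
    (A B : Matrix (Fin n) (Fin n) ℂ) (hA : IsUnit A.det) (hB : IsUnit B.det)
    (hdet : A.det = B.det)
    (g : Mat (n + n))
    (hg : g = Matrix.reindex finSumFinEquiv finSumFinEquiv (Matrix.fromBlocks A 0 0 B))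
    (hge : g * e * g⁻¹ = e)
    (x : Mat (n + n)) (hx : x ∈ cent (slSet n) e)
    (hxZ : ∀ y ∈ cent (slSet n) e, sbr n x y ∈ Submodule.span ℂ {(1 : Mat (n + n))}) :
    g * x * g⁻¹ - x ∈ Submodule.span ℂ {(1 : Mat (n + n))} :=
  psl_group_acts_trivially_on_centre_general n hn e heEven heNil A B hA hB g hg hge x hxZ

end PaperStmt

end
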